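/- Let (X,μ) be a measure space, 0<q≤∞ and J ⊆ (0,∞) with m_J = inf J > 0. If m_J ∉ J and M_J = sup J ∈ J, then ⋂_{p∈J} L_{p,q}(X,μ) = ⋂_{p∈(m_J,M_J]} L_{p,q}(X,μ). -/

import Mathlib

open MeasureTheory Set ENNReal

noncomputable section

variable {X : Type*} [MeasurableSpace X]

/-- The distribution function `d_f(α) = μ {x : |f x| > α}`. -/
def distFun (μ : Measure X) (f : X → ℝ) (α : ℝ) : ℝ≥0∞ :=
  μ {x | α < |f x|}

/-- The decreasing rearrangement `f*(t) = inf {s > 0 : d_f(s) ≤ t}`, with `inf ∅ = ∞`. -/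
def rearr (μ : Measure X) (f : X → ℝ) (t : ℝ) : ℝ≥0∞ :=
  ⨅ (s : ℝ) (_ : 0 < s ∧ distFun μ f s ≤ ENNReal.ofReal t), ENNReal.ofReal s

/-- The Lorentz quasi-norm `‖f‖_{L_{p,q}}` (for `q = ∞` the weak norm `sup_t t^{1/p} f*(t)`). -/
def lorentzNorm (μ : Measure X) (f : X → ℝ) (p q : ℝ≥0∞) : ℝ≥0∞ :=
  if q = ∞ then ⨆ t ∈ Ioi (0 : ℝ), ENNReal.ofReal t ^ (1 / p).toReal * rearr μ f t
  else (∫⁻ t in Ioi (0 : ℝ),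
      (ENNReal.ofReal t ^ (1 / p).toReal * rearr μ f t) ^ q.toReal / ENNReal.ofReal t) ^
      (1 / q.toReal)

/-- The Lorentz space `L_{p,q}(X, μ)`, as the set of measurable functions with
finite Lorentz quasi-norm. -/
def Lorentz (μ : Measure X) (p q : ℝ≥0∞) : Set (X → ℝ) :=
  {f | Measurable f ∧ lorentzNorm μ f p q < ∞}

/-! For `t > 0` and `p₁ ≤ p ≤ p₂` one has `t^{1/p} ≤ max (t^{1/p₁}) (t^{1/p₂})` (compare `t` with `1`),
so `‖f‖_{L_{p,q}}` is controlled by `‖f‖_{L_{p₁,q}}` and `‖f‖_{L_{p₂,q}}`: `L_{p₁,q} ∩ L_{p₂,q} ⊆ L_{p,q}`.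
Every `p ∈ (m_J, M_J]` lies between some `p₁ ∈ J` and `M_J ∈ J`; conversely `J ⊆ (m_J, M_J]` as `m_J ∉ J`. -/

lemma toReal_one_div_le_of_le {p₁ p : ℝ≥0∞} (hp₁ : p₁ ≠ 0) (h : p₁ ≤ p) :
    (1 / p).toReal ≤ (1 / p₁).toReal :=
  ENNReal.toReal_mono (by simpa [ENNReal.div_eq_top]) (ENNReal.div_le_div_left h 1)

lemma ENNReal.rpow_le_or_rpow_le (x : ℝ≥0∞) {a a₁ a₂ : ℝ} (h₁ : a ≤ a₁) (h₂ : a₂ ≤ a) :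
    x ^ a ≤ x ^ a₁ ∨ x ^ a ≤ x ^ a₂ := by
  rcases le_total x 1 with hx | hx
  · exact Or.inr (ENNReal.rpow_le_rpow_of_exponent_ge hx h₂)
  · exact Or.inl (ENNReal.rpow_le_rpow_of_exponent_le hx h₁)

lemma rearr_antitone (μ : Measure X) (f : X → ℝ) : Antitone (rearr μ f) :=
  fun _ _ hst ↦ le_iInf₂ fun s hs ↦ iInf₂_le s ⟨hs.1, hs.2.trans (ENNReal.ofReal_le_ofReal hst)⟩

lemma lorentzNorm_top (μ : Measure X) (f : X → ℝ) (p : ℝ≥0∞) :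
    lorentzNorm μ f p ∞ = ⨆ t ∈ Ioi (0 : ℝ), ENNReal.ofReal t ^ (1 / p).toReal * rearr μ f t :=
  if_pos rfl

lemma lorentzNorm_lt_top_iff_of_ne_top (μ : Measure X) (f : X → ℝ) (p : ℝ≥0∞) {q : ℝ≥0∞}
    (hq₀ : q ≠ 0) (hq : q ≠ ∞) :
    lorentzNorm μ f p q < ∞ ↔ ∫⁻ t in Ioi (0 : ℝ),
      (ENNReal.ofReal t ^ (1 / p).toReal * rearr μ f t) ^ q.toReal / ENNReal.ofReal t < ∞ := by
  rw [lorentzNorm, if_neg hq]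
  exact ENNReal.rpow_lt_top_iff_of_pos (by simpa using ENNReal.toReal_pos hq₀ hq)

lemma lorentzNorm_lt_top_of_le_of_le (μ : Measure X) (f : X → ℝ) {p₁ p p₂ q : ℝ≥0∞}
    (hq : q ≠ 0) (hp₁ : p₁ ≠ 0) (h₁ : p₁ ≤ p) (h₂ : p ≤ p₂)
    (hf₁ : lorentzNorm μ f p₁ q < ∞) (hf₂ : lorentzNorm μ f p₂ q < ∞) :
    lorentzNorm μ f p q < ∞ := by
  have hle (t : ℝ) :
      ENNReal.ofReal t ^ (1 / p).toReal ≤ ENNReal.ofReal t ^ (1 / p₁).toReal ∨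
        ENNReal.ofReal t ^ (1 / p).toReal ≤ ENNReal.ofReal t ^ (1 / p₂).toReal :=
    ENNReal.rpow_le_or_rpow_le _ (toReal_one_div_le_of_le hp₁ h₁)
      (toReal_one_div_le_of_le (hp₁.bot_lt.trans_le h₁).ne' h₂)
  by_cases hq_top : q = ∞
  · subst hq_top
    rw [lorentzNorm_top] at *
    refine lt_of_le_of_lt (iSup₂_le fun t ht ↦ ?_) (ENNReal.add_lt_top.mpr ⟨hf₁, hf₂⟩)
    rcases hle t with h | h
    · exact le_add_right ((mul_le_mul_left h _).trans (le_iSup₂_of_le t ht le_rfl))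
    · exact le_add_left ((mul_le_mul_left h _).trans (le_iSup₂_of_le t ht le_rfl))
  rw [lorentzNorm_lt_top_iff_of_ne_top μ f _ hq hq_top] at *
  have hmeas (p' : ℝ≥0∞) : Measurable fun t : ℝ ↦
      (ENNReal.ofReal t ^ (1 / p').toReal * rearr μ f t) ^ q.toReal / ENNReal.ofReal t :=
    (((ENNReal.measurable_ofReal.pow_const _).mul (rearr_antitone μ f).measurable).pow_const
      _).div ENNReal.measurable_ofReal
  have hbound (t : ℝ) :
      (ENNReal.ofReal t ^ (1 / p).toReal * rearr μ f t) ^ q.toReal / ENNReal.ofReal t ≤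
        (ENNReal.ofReal t ^ (1 / p₁).toReal * rearr μ f t) ^ q.toReal / ENNReal.ofReal t +
        (ENNReal.ofReal t ^ (1 / p₂).toReal * rearr μ f t) ^ q.toReal / ENNReal.ofReal t := by
    have hφ : Monotone fun u ↦ (u * rearr μ f t) ^ q.toReal / ENNReal.ofReal t := fun _ _ h ↦
      ENNReal.div_le_div_right (ENNReal.rpow_le_rpow (mul_le_mul_left h _) toReal_nonneg) _
    rcases hle t with h | h
    · exact le_add_right (hφ h)
    · exact le_add_left (hφ h)
  refine lt_of_le_of_lt (lintegral_mono hbound) ?_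
  rw [lintegral_add_left (hmeas p₁)]
  exact ENNReal.add_lt_top.mpr ⟨hf₁, hf₂⟩

lemma mem_lorentz_of_le_of_le {μ : Measure X} {f : X → ℝ} {p₁ p p₂ q : ℝ≥0∞}
    (hq : q ≠ 0) (hp₁ : p₁ ≠ 0) (h₁ : p₁ ≤ p) (h₂ : p ≤ p₂)
    (hf₁ : f ∈ Lorentz μ p₁ q) (hf₂ : f ∈ Lorentz μ p₂ q) : f ∈ Lorentz μ p q :=
  ⟨hf₁.1, lorentzNorm_lt_top_of_le_of_le μ f hq hp₁ h₁ h₂ hf₁.2 hf₂.2⟩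

lemma subset_Ioc_sInf_sSup {α : Type*} [CompleteLinearOrder α] {J : Set α} (hJ : sInf J ∉ J) :
    J ⊆ Ioc (sInf J) (sSup J) :=
  fun _ hp ↦ ⟨(sInf_le hp).lt_of_ne fun h ↦ hJ (h ▸ hp), le_sSup hp⟩

theorem stmt8_general (μ : Measure X) (q : ℝ≥0∞) (hq : 0 < q) (J : Set ℝ≥0∞)
    (hm : 0 < sInf J) (hmJ : sInf J ∉ J) (hMJ : sSup J ∈ J) :
    (⋂ p ∈ J, Lorentz μ p q) = ⋂ p ∈ Ioc (sInf J) (sSup J), Lorentz μ p q := by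
  refine Subset.antisymm (fun f hf ↦ ?_) (biInter_subset_biInter_left (subset_Ioc_sInf_sSup hmJ))
  simp only [mem_iInter] at hf ⊢
  intro p hp
  obtain ⟨p₁, hp₁J, hp₁⟩ := sInf_lt_iff.mp hp.1
  exact mem_lorentz_of_le_of_le hq.ne' (hm.trans_le (sInf_le hp₁J)).ne' hp₁.le hp.2
    (hf p₁ hp₁J) (hf _ hMJ)

/-- If `m_J ∉ J` and `M_J ∈ J` then `⋂_{p∈J} L_{p,q} = ⋂_{p∈(m_J,M_J]} L_{p,q}`. -/
theorem stmt8 (μ : Measure X) (q : ℝ≥0∞) (hq : 0 < q) (J : Set ℝ≥0∞)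
    (hJ : J ⊆ Ioo 0 ∞) (hm : 0 < sInf J) (hmJ : sInf J ∉ J) (hMJ : sSup J ∈ J) :
    (⋂ p ∈ J, Lorentz μ p q) = ⋂ p ∈ Ioc (sInf J) (sSup J), Lorentz μ p q :=
  stmt8_general μ q hq J hm hmJ hMJ
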